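/- Fix k ≥ 2. Define t_k : ℕ^(k+1) → ℕ by t_k(x₀,…,x_k) = k+2 whenever (x₀,…,x_k) ∈ ({(0,0),(1,2)} viewed in the first two coordinates) × {0,3} × ⋯ × {0,k+1} except the tuple (1,2,3,…,k+1), and t_k injective into ℕ ∖ {0,…,k+2} otherwise. Let ℂ_k = ⟨ℕ; t_k⟩. Then the labeled k-cube η = t_k(cube₀(0,1), cube₀(0,2), cube₁(0,3), …, cube_{k-1}(0,k+1)) satisfies: η_f = k+2 for every f ∈ {0,1}^k except the all-ones function, and η_{(1,…,1)} ≠ k+2. Hence η witnesses [1,…,1]_TC ≠ 0 (k-ary) in ℂ_k. -/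
import Mathlib


/-- The special domain of `t_k`: `{(0,0),(1,2)}` in the first two coordinates,
`{0, j+1}` in coordinate `j ≥ 2`, minus the tuple `(1,2,3,…,k+1)`. -/
def SpecialDom (k : ℕ) (x : Fin (k + 1) → ℕ) : Prop :=
  ((x 0 = 0 ∧ x 1 = 0) ∨ (x 0 = 1 ∧ x 1 = 2)) ∧
  (∀ j : Fin (k + 1), 2 ≤ j.val → (x j = 0 ∨ x j = j.val + 1)) ∧
  x ≠ fun j => j.val + 1

/-- The cube `η = t_k(cube₀(0,1), cube₀(0,2), cube₁(0,3), …, cube_{k-1}(0,k+1))`: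
argument `0` of `t_k` is `cube₀(0,1)`, argument `1` is `cube₀(0,2)`, and
argument `j ≥ 2` is `cube_{j-1}(0, j+1)`, all evaluated coordinatewise. -/
def eta (k : ℕ) (hk : 2 ≤ k) (t : (Fin (k + 1) → ℕ) → ℕ) : (Fin k → Fin 2) → ℕ :=
  fun f => t (fun j =>
    if j.val = 0 then (if f ⟨0, by omega⟩ = 0 then 0 else 1)
    else if j.val = 1 then (if f ⟨0, by omega⟩ = 0 then 0 else 2)
    else (if f ⟨j.val - 1, by have := j.isLt; omega⟩ = 0 then 0 else j.val + 1))

theorem stmt_12 (k : ℕ) (hk : 2 ≤ k) (t : (Fin (k + 1) → ℕ) → ℕ)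
    (ht1 : ∀ x, SpecialDom k x → t x = k + 2)
    (ht2 : ∀ x, ¬ SpecialDom k x → k + 3 ≤ t x)
    (ht3 : ∀ x y, ¬ SpecialDom k x → ¬ SpecialDom k y → t x = t y → x = y) :
    (∀ f : Fin k → Fin 2, f ≠ (fun _ => 1) → eta k hk t f = k + 2) ∧
      eta k hk t (fun _ => 1) ≠ k + 2 := by
  have hone : (1 : Fin 2) ≠ 0 := by decide
  have h0v : ((0 : Fin (k + 1)) : ℕ) = 0 := rfl
  have h1v : ((1 : Fin (k + 1)) : ℕ) = 1 := by
    show 1 % (k + 1) = 1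
    exact Nat.mod_eq_of_lt (by omega)
  constructor
  · intro f hf
    apply ht1
    have e0 : (0 : Fin (k + 1)) = ⟨0, by omega⟩ := rfl
    have e1 : (1 : Fin (k + 1)) = ⟨1, (by omega : (1:ℕ) < k + 1)⟩ := Fin.ext h1v
    refine ⟨?_, ?_, ?_⟩
    · rw [e0, e1]
      by_cases h : f ⟨0, by omega⟩ = 0
      · left
        exact ⟨by simp [h], by simp [h]⟩
      · right
        exact ⟨by simp [h], by simp [h]⟩
    · intro j hj
      simp only
      rw [if_neg (by omega), if_neg (by omega)]
      split <;> simp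
    · intro hcontra
      have : ∃ i : Fin k, f i = 0 := by
        by_contra h
        push_neg at h
        apply hf
        funext i
        have := h i
        omega
      obtain ⟨i, hi⟩ := this
      by_cases hi0 : i.val = 0
      · have hcf := congrFun hcontra ⟨0, by omega⟩
        simp only at hcf
        have hfi : f ⟨0, by omega⟩ = 0 := by
          have he : (⟨0, by omega⟩ : Fin k) = i := Fin.ext hi0.symm
          rw [he, hi]
        simp [hfi] at hcf
      · have hlt : i.val + 1 < k + 1 := by omega
        have hcf := congrFun hcontra ⟨i.val + 1, hlt⟩
        simp only at hcf
        rw [if_neg (by omega), if_neg (by omega)] at hcf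
        have heq : (⟨i.val + 1 - 1, by omega⟩ : Fin k) = i := Fin.ext (by simp)
        rw [heq, hi] at hcf
        simp at hcf
  · intro hcontra
    have hx : (fun j : Fin (k+1) =>
        if j.val = 0 then (if (fun _ : Fin k => (1 : Fin 2)) ⟨0, by omega⟩ = 0 then 0 else 1)
        else if j.val = 1 then (if (fun _ : Fin k => (1 : Fin 2)) ⟨0, by omega⟩ = 0 then 0 else 2)
        else (if (fun _ : Fin k => (1 : Fin 2)) ⟨j.val - 1, by have := j.isLt; omega⟩ = 0 then 0 else j.val + 1))
        = fun j => j.val + 1 := by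
      funext j
      simp only [if_neg hone]
      split_ifs <;> omega
    have hnot : ¬ SpecialDom k (fun j : Fin (k+1) => j.val + 1) := by
      intro h
      exact h.2.2 rfl
    have hge := ht2 _ hnot
    unfold eta at hcontra
    rw [hx] at hcontra
    omega
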